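/- Let X = {{i,j} : 1 ≤ i < j ≤ 7} and call a subset T ⊆ X nice if, whenever i, j, k ∈ I = {1,...,7} are distinct with k ≠ i*j, and {i,j} ∈ T and {i*j, k} ∈ T, then P_{{i,j,k}} := {{i,j},{j,k},{k,i},{i,j*k},{j,k*i},{k,i*j}} ⊆ T. For T ⊆ X let ε^T: G×G → F be given by ε^T(g_i,g_j) = 1 if {i,j} ∈ T and ε^T(g_i,g_j) = 0 otherwise. Also define, for nonzero λ, λ_1, λ_2 ∈ F, the maps η^λ, μ^λ, β^{λ_1,λ_2}: G×G → F, symmetric and vanishing outside the indicated unordered pairs: η^λ(g_1,g_2)=η^λ(g_1,g_3)=η^λ(g_1,g_4)=1, η^λ(g_1,g_7)=λ; μ^λ(g_1,g_2)=μ^λ(g_1,g_4)=μ^λ(g_1,g_6)=1, μ^λ(g_1,g_3)=μ^λ(g_1,g_7)=λ; β^{λ_1,λ_2}(g_1,g_2)=β^{λ_1,λ_2}(g_1,g_4)=1, β^{λ_1,λ_2}(g_1,g_3)=β^{λ_1,λ_2}(g_1,g_7)=λ_1, β^{λ_1,λ_2}(g_1,g_5)=β^{λ_1,λ_2}(g_1,g_6)=λ_2.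 Then for every nice T and for every such η^λ, μ^λ, β^{λ_1,λ_2}, the bilinear product on the space of formal sums Σ_{g∈G} r_g g (r_g ∈ V = F^4) defined by [r g_i, s g_j]' = ε(g_i,g_j) σ_{i,j}(r,s) g_{i*j}, where ε is the chosen map, is a Lie bracket; hence V^{εσ}[G] is a Lie algebra over G. -/
import Mathlib


namespace GGA

noncomputable section

variable (F : Type*) [Field F]

/-- The labelling `g_0, …, g_7` of the eight elements of `G = (ℤ/2ℤ)³`:
`g_0=(0,0,0), g_1=(1,0,0), g_2=(0,1,0), g_3=(0,0,1), g_4=(1,1,0), g_5=(0,1,1),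
g_6=(1,1,1), g_7=(1,0,1)`. -/
def lab : Fin 8 → Fin 3 → ZMod 2 :=
  ![![0, 0, 0], ![1, 0, 0], ![0, 1, 0], ![0, 0, 1],
    ![1, 1, 0], ![0, 1, 1], ![1, 1, 1], ![1, 0, 1]]

/-- `star i j` is the unique index `k ∈ {0,…,7}` with `g_i + g_j = g_k`
(the labelling `lab` is a bijection). -/
def star (i j : Fin 8) : Fin 8 := Function.invFun lab (lab i + lab j)

/-- The formula for `σ_{i,i+1}(r,s)`. -/
def f1 (r s : Fin 4 → F) : Fin 4 → F :=
  ![-(r 1 * s 0) - r 2 * s 2, -(r 1 * s 2) - r 2 * s 0,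
    r 0 * s 1 + r 3 * s 3, r 0 * s 3 + r 3 * s 1]

/-- The formula for `σ_{i,i+2}(r,s)`. -/
def f2 (r s : Fin 4 → F) : Fin 4 → F :=
  ![r 1 * s 2 + r 3 * s 3, -(r 0 * s 0) - r 2 * s 1,
    -(r 0 * s 1) - r 2 * s 0, r 1 * s 3 + r 3 * s 2]

/-- The formula for `σ_{i,i+4}(r,s)`. -/
def f4 (r s : Fin 4 → F) : Fin 4 → F :=
  ![-(r 0 * s 1) - r 1 * s 2, r 2 * s 0 + r 3 * s 3,
    -(r 0 * s 2) - r 1 * s 1, r 2 * s 3 + r 3 * s 0]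

/-- The twist `σ : G × G → Bil(V × V, V)`, `V = F⁴`, written in terms of the indices:
`σ i j r s = σ_{i,j}(r,s)`.  For `i, j ∈ I = {1,…,7}` the value depends on the
difference `j - i (mod 7)`, matching the definition
`σ_{i,i+1}, σ_{i,i+2}, σ_{i,i+4}` explicit, `σ_{0,i}=σ_{i,0}=σ_{0,0}=σ_{i,i}=0`,
`σ_{i,i+3}(r,s)=-σ_{i,i+4}(s,r)`, `σ_{i,i+5}(r,s)=-σ_{i,i+2}(s,r)`,
`σ_{i,i+6}(r,s)=-σ_{i,i+1}(s,r)`. -/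
def sigma (i j : Fin 8) (r s : Fin 4 → F) : Fin 4 → F :=
  if i = 0 ∨ j = 0 ∨ i = j then 0
  else if ((j : ℕ) + 7 - (i : ℕ)) % 7 = 1 then f1 F r s
  else if ((j : ℕ) + 7 - (i : ℕ)) % 7 = 2 then f2 F r s
  else if ((j : ℕ) + 7 - (i : ℕ)) % 7 = 3 then -f4 F s r
  else if ((j : ℕ) + 7 - (i : ℕ)) % 7 = 4 then f4 F r s
  else if ((j : ℕ) + 7 - (i : ℕ)) % 7 = 5 then -f2 F s r
  else -f1 F s r

/-- `single i r` is the formal sum `r gᵢ` in `V^σ[G]`, viewed as a function `G → V`. -/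
def single (i : Fin 8) (r : Fin 4 → F) : Fin 8 → Fin 4 → F :=
  fun k => if k = i then r else 0

/-- The product of `V^σ[G]`: the unique bilinear extension of
`[r gᵢ, s gⱼ] = σ_{i,j}(r,s) g_{i*j}`. -/
def bracket (x y : Fin 8 → Fin 4 → F) : Fin 8 → Fin 4 → F :=
  fun k => ∑ i : Fin 8, ∑ j : Fin 8, if star i j = k then sigma F i j (x i) (y j) else 0


/-- The set `P_{{i,j,k}} = {{i,j},{j,k},{k,i},{i,j*k},{j,k*i},{k,i*j}}` of unordered
pairs of indices. -/
def Pset (i j k : Fin 8) : Set (Sym2 (Fin 8)) :=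
  {s(i, j), s(j, k), s(k, i), s(i, star j k), s(j, star k i), s(k, star i j)}

/-- A set `T` of unordered pairs of indices of `I = {1,…,7}` is *nice* if, whenever
`i, j, k ∈ I` are distinct with `k ≠ i*j` and `{i,j}, {i*j,k} ∈ T`, then
`P_{{i,j,k}} ⊆ T`. -/
def Nice (T : Set (Sym2 (Fin 8))) : Prop :=
  ∀ i j k : Fin 8, i ≠ 0 → j ≠ 0 → k ≠ 0 → i ≠ j → j ≠ k → i ≠ k → k ≠ star i j →
    s(i, j) ∈ T → s(star i j, k) ∈ T → Pset i j k ⊆ T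

open scoped Classical in
/-- The graded contraction `ε^T` associated to a subset `T ⊆ X`. -/
def epsT (T : Set (Sym2 (Fin 8))) (i j : Fin 8) : F :=
  if s(i, j) ∈ T then 1 else 0

/-- `inPairs i j l` holds when the unordered pair `{i,j}` occurs in the list `l`. -/
def inPairs (i j : Fin 8) (l : List (Fin 8 × Fin 8)) : Prop :=
  (i, j) ∈ l ∨ (j, i) ∈ l

instance (i j : Fin 8) (l : List (Fin 8 × Fin 8)) : Decidable (inPairs i j l) := by
  unfold inPairs; infer_instance

/-- The graded contraction `η^λ`: symmetric, supported on `T₁₄`, with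
`η^λ(g₁,g₂)=η^λ(g₁,g₃)=η^λ(g₁,g₄)=1` and `η^λ(g₁,g₇)=λ`. -/
def etaC (lam : F) (i j : Fin 8) : F :=
  if inPairs i j [(1, 2), (1, 3), (1, 4)] then 1
  else if inPairs i j [(1, 7)] then lam else 0

/-- The graded contraction `μ^λ`: symmetric, supported on `T₁₇`, with
`μ^λ(g₁,g₂)=μ^λ(g₁,g₄)=μ^λ(g₁,g₆)=1` and `μ^λ(g₁,g₃)=μ^λ(g₁,g₇)=λ`. -/
def muC (lam : F) (i j : Fin 8) : F :=
  if inPairs i j [(1, 2), (1, 4), (1, 6)] then 1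
  else if inPairs i j [(1, 3), (1, 7)] then lam else 0

/-- The graded contraction `β^{λ₁,λ₂}`: symmetric, supported on `T₂₀`, with
`β(g₁,g₂)=β(g₁,g₄)=1`, `β(g₁,g₃)=β(g₁,g₇)=λ₁`, `β(g₁,g₅)=β(g₁,g₆)=λ₂`. -/
def betaC (lam1 lam2 : F) (i j : Fin 8) : F :=
  if inPairs i j [(1, 2), (1, 4)] then 1
  else if inPairs i j [(1, 3), (1, 7)] then lam1
  else if inPairs i j [(1, 5), (1, 6)] then lam2 else 0

/-- The contracted product `[r gᵢ, s gⱼ]' = ε(gᵢ,gⱼ) σ_{i,j}(r,s) g_{i*j}` on the space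
of formal sums `Σ r_g g`. -/
def cbracket (ε : Fin 8 → Fin 8 → F) (x y : Fin 8 → Fin 4 → F) : Fin 8 → Fin 4 → F :=
  fun k => ∑ i : Fin 8, ∑ j : Fin 8, if star i j = k then ε i j • sigma F i j (x i) (y j) else 0

/-- `B` is a Lie bracket: alternating and satisfying the Jacobi identity. -/
def IsLieProd (B : (Fin 8 → Fin 4 → F) → (Fin 8 → Fin 4 → F) → (Fin 8 → Fin 4 → F)) : Prop :=
  (∀ x, B x x = 0) ∧ ∀ x y z, B x (B y z) + B y (B z x) + B z (B x y) = 0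


/-! ### Auxiliary development -/

/-- Explicit table for `star`. -/
def starTab : Fin 8 → Fin 8 → Fin 8 :=
  ![![0,1,2,3,4,5,6,7], ![1,0,4,7,2,6,5,3], ![2,4,0,5,1,3,7,6], ![3,7,5,0,6,2,4,1],
    ![4,2,1,6,0,7,3,5], ![5,6,3,2,7,0,1,4], ![6,5,7,4,3,1,0,2], ![7,3,6,1,5,4,2,0]]

lemma lab_inj : Function.Injective lab := by decide

lemma lab_starTab : ∀ i j, lab (starTab i j) = lab i + lab j := by decide

lemma star_eq_tab : star = starTab := by
  funext i j
  have h := lab_starTab i j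
  unfold star
  rw [← h, Function.leftInverse_invFun lab_inj]

lemma star_comm : ∀ i j : Fin 8, starTab i j = starTab j i := by decide
lemma star_cancel : ∀ i j : Fin 8, starTab j (starTab i j) = i := by decide
lemma star_cancel' : ∀ i j : Fin 8, starTab (starTab i j) i = j := by decide
lemma star_rot : ∀ i j l : Fin 8, starTab j (starTab l i) = starTab i (starTab j l)
    ∧ starTab l (starTab i j) = starTab i (starTab j l) := by decide
lemma star_cycle : ∀ a b c : Fin 8, starTab a b = c ↔ starTab b c = a := by decide

def tau : Fin 8 → Fin 8 := ![0,2,3,4,5,6,7,1]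
lemma tau_surj : ∀ y : Fin 8, ∃ x, tau x = y := by decide
lemma star_shift : ∀ i j, starTab (tau i) (tau j) = tau (starTab i j) := by decide

/-! #### bilinearity lemmas for `f1,f2,f4` and `sigma` -/

lemma f1_add_left (r r' s : Fin 4 → F) : f1 F (r + r') s = f1 F r s + f1 F r' s := by
  funext u; fin_cases u <;> simp [f1] <;> ring
lemma f2_add_left (r r' s : Fin 4 → F) : f2 F (r + r') s = f2 F r s + f2 F r' s := by
  funext u; fin_cases u <;> simp [f2] <;> ring
lemma f4_add_left (r r' s : Fin 4 → F) : f4 F (r + r') s = f4 F r s + f4 F r' s := by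
  funext u; fin_cases u <;> simp [f4] <;> ring
lemma f1_add_right (r s s' : Fin 4 → F) : f1 F r (s + s') = f1 F r s + f1 F r s' := by
  funext u; fin_cases u <;> simp [f1] <;> ring
lemma f2_add_right (r s s' : Fin 4 → F) : f2 F r (s + s') = f2 F r s + f2 F r s' := by
  funext u; fin_cases u <;> simp [f2] <;> ring
lemma f4_add_right (r s s' : Fin 4 → F) : f4 F r (s + s') = f4 F r s + f4 F r s' := by
  funext u; fin_cases u <;> simp [f4] <;> ring
lemma f1_smul_right (c : F) (r s : Fin 4 → F) : f1 F r (c • s) = c • f1 F r s := by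
  funext u; fin_cases u <;> simp [f1] <;> ring
lemma f2_smul_right (c : F) (r s : Fin 4 → F) : f2 F r (c • s) = c • f2 F r s := by
  funext u; fin_cases u <;> simp [f2] <;> ring
lemma f4_smul_right (c : F) (r s : Fin 4 → F) : f4 F r (c • s) = c • f4 F r s := by
  funext u; fin_cases u <;> simp [f4] <;> ring
lemma f1_smul_left (c : F) (r s : Fin 4 → F) : f1 F (c • r) s = c • f1 F r s := by
  funext u; fin_cases u <;> simp [f1] <;> ring
lemma f2_smul_left (c : F) (r s : Fin 4 → F) : f2 F (c • r) s = c • f2 F r s := by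
  funext u; fin_cases u <;> simp [f2] <;> ring
lemma f4_smul_left (c : F) (r s : Fin 4 → F) : f4 F (c • r) s = c • f4 F r s := by
  funext u; fin_cases u <;> simp [f4] <;> ring
lemma f1_zero_right (r : Fin 4 → F) : f1 F r 0 = 0 := by
  funext u; fin_cases u <;> simp [f1]
lemma f2_zero_right (r : Fin 4 → F) : f2 F r 0 = 0 := by
  funext u; fin_cases u <;> simp [f2]
lemma f4_zero_right (r : Fin 4 → F) : f4 F r 0 = 0 := by
  funext u; fin_cases u <;> simp [f4]
lemma f1_zero_left (s : Fin 4 → F) : f1 F 0 s = 0 := by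
  funext u; fin_cases u <;> simp [f1]
lemma f2_zero_left (s : Fin 4 → F) : f2 F 0 s = 0 := by
  funext u; fin_cases u <;> simp [f2]
lemma f4_zero_left (s : Fin 4 → F) : f4 F 0 s = 0 := by
  funext u; fin_cases u <;> simp [f4]

lemma sigma_diag (i : Fin 8) (r s : Fin 4 → F) : sigma F i i r s = 0 := by
  unfold sigma; rw [if_pos (Or.inr (Or.inr rfl))]
lemma sigma_idx0_left (j : Fin 8) (r s : Fin 4 → F) : sigma F 0 j r s = 0 := by
  unfold sigma; rw [if_pos (Or.inl rfl)]
lemma sigma_idx0_right (i : Fin 8) (r s : Fin 4 → F) : sigma F i 0 r s = 0 := by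
  unfold sigma; rw [if_pos (Or.inr (Or.inl rfl))]
lemma sigma_vzero_right (i j : Fin 8) (r : Fin 4 → F) : sigma F i j r 0 = 0 := by
  unfold sigma
  split_ifs <;>
    simp [f1_zero_right, f2_zero_right, f4_zero_right, f1_zero_left, f2_zero_left, f4_zero_left]
lemma sigma_vzero_left (i j : Fin 8) (s : Fin 4 → F) : sigma F i j 0 s = 0 := by
  unfold sigma
  split_ifs <;>
    simp [f1_zero_right, f2_zero_right, f4_zero_right, f1_zero_left, f2_zero_left, f4_zero_left]
lemma sigma_add_left (i j : Fin 8) (r r' s : Fin 4 → F) :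
    sigma F i j (r + r') s = sigma F i j r s + sigma F i j r' s := by
  unfold sigma
  split_ifs <;>
    simp [f1_add_left, f2_add_left, f4_add_left, f1_add_right, f2_add_right, f4_add_right] <;>
    abel
lemma sigma_add_right (i j : Fin 8) (r s s' : Fin 4 → F) :
    sigma F i j r (s + s') = sigma F i j r s + sigma F i j r s' := by
  unfold sigma
  split_ifs <;>
    simp [f1_add_left, f2_add_left, f4_add_left, f1_add_right, f2_add_right, f4_add_right] <;>
    abel
lemma sigma_smul_right (i j : Fin 8) (c : F) (r s : Fin 4 → F) :
    sigma F i j r (c • s) = c • sigma F i j r s := by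
  unfold sigma
  split_ifs <;>
    simp [f1_smul_left, f2_smul_left, f4_smul_left, f1_smul_right, f2_smul_right, f4_smul_right]
lemma sigma_skew : ∀ i j : Fin 8, ∀ r s : Fin 4 → F, sigma F j i s r = - sigma F i j r s := by
  intro i j r s
  fin_cases i <;> fin_cases j <;> simp [sigma]
lemma sigma_shift : ∀ i j : Fin 8, sigma F (tau i) (tau j) = sigma F i j := by
  intro i j
  fin_cases i <;> fin_cases j <;> rfl

/-! #### Jacobi identity for `sigma`, base cases `i = 1` -/

lemma jc_0_0 (r s t : Fin 4 → F) :
    (0 : Fin 4 → F) + (0 : Fin 4 → F)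
      + (0 : Fin 4 → F) = 0 := by
  simp

lemma jc_0_1 (r s t : Fin 4 → F) :
    (0 : Fin 4 → F) + (0 : Fin 4 → F)
      + (0 : Fin 4 → F) = 0 := by
  simp

lemma jc_0_2 (r s t : Fin 4 → F) :
    f1 F r (0 : Fin 4 → F) + (0 : Fin 4 → F)
      + -f1 F (0 : Fin 4 → F) t = 0 := by
  funext u; fin_cases u <;> simp [f1, f2, f4] <;> ring

lemma jc_0_3 (r s t : Fin 4 → F) :
    f2 F r (0 : Fin 4 → F) + (0 : Fin 4 → F)
      + -f2 F (0 : Fin 4 → F) t = 0 := by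
  funext u; fin_cases u <;> simp [f1, f2, f4] <;> ring

lemma jc_0_4 (r s t : Fin 4 → F) :
    -f4 F (0 : Fin 4 → F) r + (0 : Fin 4 → F)
      + f4 F t (0 : Fin 4 → F) = 0 := by
  funext u; fin_cases u <;> simp [f1, f2, f4] <;> ring

lemma jc_0_5 (r s t : Fin 4 → F) :
    f4 F r (0 : Fin 4 → F) + (0 : Fin 4 → F)
      + -f4 F (0 : Fin 4 → F) t = 0 := by
  funext u; fin_cases u <;> simp [f1, f2, f4] <;> ring

lemma jc_0_6 (r s t : Fin 4 → F) :
    -f2 F (0 : Fin 4 → F) r + (0 : Fin 4 → F)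
      + f2 F t (0 : Fin 4 → F) = 0 := by
  funext u; fin_cases u <;> simp [f1, f2, f4] <;> ring

lemma jc_0_7 (r s t : Fin 4 → F) :
    -f1 F (0 : Fin 4 → F) r + (0 : Fin 4 → F)
      + f1 F t (0 : Fin 4 → F) = 0 := by
  funext u; fin_cases u <;> simp [f1, f2, f4] <;> ring

lemma jc_1_0 (r s t : Fin 4 → F) :
    (0 : Fin 4 → F) + (0 : Fin 4 → F)
      + (0 : Fin 4 → F) = 0 := by
  simp

lemma jc_1_1 (r s t : Fin 4 → F) :
    (0 : Fin 4 → F) + (0 : Fin 4 → F)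
      + (0 : Fin 4 → F) = 0 := by
  simp

lemma jc_1_2 (r s t : Fin 4 → F) :
    -f4 F (f1 F s t) r + -f4 F (-f1 F r t) s
      + (0 : Fin 4 → F) = 0 := by
  funext u; fin_cases u <;> simp [f1, f2, f4] <;> ring

lemma jc_1_3 (r s t : Fin 4 → F) :
    -f1 F (f2 F s t) r + -f1 F (-f2 F r t) s
      + (0 : Fin 4 → F) = 0 := by
  funext u; fin_cases u <;> simp [f1, f2, f4] <;> ring

lemma jc_1_4 (r s t : Fin 4 → F) :
    f1 F r (-f4 F t s) + f1 F s (f4 F t r)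
      + (0 : Fin 4 → F) = 0 := by
  funext u; fin_cases u <;> simp [f1, f2, f4] <;> ring

lemma jc_1_5 (r s t : Fin 4 → F) :
    -f2 F (f4 F s t) r + -f2 F (-f4 F r t) s
      + (0 : Fin 4 → F) = 0 := by
  funext u; fin_cases u <;> simp [f1, f2, f4] <;> ring

lemma jc_1_6 (r s t : Fin 4 → F) :
    f4 F r (-f2 F t s) + f4 F s (f2 F t r)
      + (0 : Fin 4 → F) = 0 := by
  funext u; fin_cases u <;> simp [f1, f2, f4] <;> ring

lemma jc_1_7 (r s t : Fin 4 → F) :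
    f2 F r (-f1 F t s) + f2 F s (f1 F t r)
      + (0 : Fin 4 → F) = 0 := by
  funext u; fin_cases u <;> simp [f1, f2, f4] <;> ring

lemma jc_2_0 (r s t : Fin 4 → F) :
    f1 F r (0 : Fin 4 → F) + -f1 F (0 : Fin 4 → F) s
      + (0 : Fin 4 → F) = 0 := by
  funext u; fin_cases u <;> simp [f1, f2, f4] <;> ring

lemma jc_2_1 (r s t : Fin 4 → F) :
    -f4 F (-f1 F t s) r + (0 : Fin 4 → F)
      + -f4 F (f1 F r s) t = 0 := by
  funext u; fin_cases u <;> simp [f1, f2, f4] <;> ring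

lemma jc_2_2 (r s t : Fin 4 → F) :
    (0 : Fin 4 → F) + f2 F s (-f1 F r t)
      + f2 F t (f1 F r s) = 0 := by
  funext u; fin_cases u <;> simp [f1, f2, f4] <;> ring

lemma jc_2_3 (r s t : Fin 4 → F) :
    f4 F r (f1 F s t) + -f2 F (-f2 F r t) s
      + f1 F t (f1 F r s) = 0 := by
  funext u; fin_cases u <;> simp [f1, f2, f4] <;> ring

lemma jc_2_4 (r s t : Fin 4 → F) :
    (0 : Fin 4 → F) + (0 : Fin 4 → F)
      + (0 : Fin 4 → F) = 0 := by
  simp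

lemma jc_2_5 (r s t : Fin 4 → F) :
    f2 F r (-f4 F t s) + f4 F s (-f4 F r t)
      + -f1 F (f1 F r s) t = 0 := by
  funext u; fin_cases u <;> simp [f1, f2, f4] <;> ring

lemma jc_2_6 (r s t : Fin 4 → F) :
    -f1 F (f4 F s t) r + -f4 F (f2 F t r) s
      + -f2 F (f1 F r s) t = 0 := by
  funext u; fin_cases u <;> simp [f1, f2, f4] <;> ring

lemma jc_2_7 (r s t : Fin 4 → F) :
    -f2 F (-f2 F t s) r + f1 F s (f1 F t r)
      + f4 F t (f1 F r s) = 0 := by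
  funext u; fin_cases u <;> simp [f1, f2, f4] <;> ring

lemma jc_3_0 (r s t : Fin 4 → F) :
    f2 F r (0 : Fin 4 → F) + -f2 F (0 : Fin 4 → F) s
      + (0 : Fin 4 → F) = 0 := by
  funext u; fin_cases u <;> simp [f1, f2, f4] <;> ring

lemma jc_3_1 (r s t : Fin 4 → F) :
    -f1 F (-f2 F t s) r + (0 : Fin 4 → F)
      + -f1 F (f2 F r s) t = 0 := by
  funext u; fin_cases u <;> simp [f1, f2, f4] <;> ring

lemma jc_3_2 (r s t : Fin 4 → F) :
    f4 F r (-f1 F t s) + f1 F s (-f1 F r t)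
      + -f2 F (f2 F r s) t = 0 := by
  funext u; fin_cases u <;> simp [f1, f2, f4] <;> ring

lemma jc_3_3 (r s t : Fin 4 → F) :
    (0 : Fin 4 → F) + f4 F s (-f2 F r t)
      + f4 F t (f2 F r s) = 0 := by
  funext u; fin_cases u <;> simp [f1, f2, f4] <;> ring

lemma jc_3_4 (r s t : Fin 4 → F) :
    -f2 F (f1 F s t) r + -f1 F (f4 F t r) s
      + -f4 F (f2 F r s) t = 0 := by
  funext u; fin_cases u <;> simp [f1, f2, f4] <;> ring

lemma jc_3_5 (r s t : Fin 4 → F) :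
    f1 F r (f2 F s t) + -f4 F (-f4 F r t) s
      + f2 F t (f2 F r s) = 0 := by
  funext u; fin_cases u <;> simp [f1, f2, f4] <;> ring

lemma jc_3_6 (r s t : Fin 4 → F) :
    -f4 F (-f4 F t s) r + f2 F s (f2 F t r)
      + f1 F t (f2 F r s) = 0 := by
  funext u; fin_cases u <;> simp [f1, f2, f4] <;> ring

lemma jc_3_7 (r s t : Fin 4 → F) :
    (0 : Fin 4 → F) + (0 : Fin 4 → F)
      + (0 : Fin 4 → F) = 0 := by
  simp

lemma jc_4_0 (r s t : Fin 4 → F) :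
    -f4 F (0 : Fin 4 → F) r + f4 F s (0 : Fin 4 → F)
      + (0 : Fin 4 → F) = 0 := by
  funext u; fin_cases u <;> simp [f1, f2, f4] <;> ring

lemma jc_4_1 (r s t : Fin 4 → F) :
    f1 F r (f4 F s t) + (0 : Fin 4 → F)
      + f1 F t (-f4 F s r) = 0 := by
  funext u; fin_cases u <;> simp [f1, f2, f4] <;> ring

lemma jc_4_2 (r s t : Fin 4 → F) :
    (0 : Fin 4 → F) + (0 : Fin 4 → F)
      + (0 : Fin 4 → F) = 0 := by
  simp

lemma jc_4_3 (r s t : Fin 4 → F) :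
    -f2 F (-f1 F t s) r + -f4 F (-f2 F r t) s
      + -f1 F (-f4 F s r) t = 0 := by
  funext u; fin_cases u <;> simp [f1, f2, f4] <;> ring

lemma jc_4_4 (r s t : Fin 4 → F) :
    (0 : Fin 4 → F) + -f2 F (f4 F t r) s
      + -f2 F (-f4 F s r) t = 0 := by
  funext u; fin_cases u <;> simp [f1, f2, f4] <;> ring

lemma jc_4_5 (r s t : Fin 4 → F) :
    -f1 F (f1 F s t) r + f2 F s (-f4 F r t)
      + f4 F t (-f4 F s r) = 0 := by
  funext u; fin_cases u <;> simp [f1, f2, f4] <;> ring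

lemma jc_4_6 (r s t : Fin 4 → F) :
    f2 F r (f2 F s t) + f1 F s (f2 F t r)
      + -f4 F (-f4 F s r) t = 0 := by
  funext u; fin_cases u <;> simp [f1, f2, f4] <;> ring

lemma jc_4_7 (r s t : Fin 4 → F) :
    f4 F r (-f4 F t s) + -f1 F (f1 F t r) s
      + f2 F t (-f4 F s r) = 0 := by
  funext u; fin_cases u <;> simp [f1, f2, f4] <;> ring

lemma jc_5_0 (r s t : Fin 4 → F) :
    f4 F r (0 : Fin 4 → F) + -f4 F (0 : Fin 4 → F) s
      + (0 : Fin 4 → F) = 0 := by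
  funext u; fin_cases u <;> simp [f1, f2, f4] <;> ring

lemma jc_5_1 (r s t : Fin 4 → F) :
    -f2 F (-f4 F t s) r + (0 : Fin 4 → F)
      + -f2 F (f4 F r s) t = 0 := by
  funext u; fin_cases u <;> simp [f1, f2, f4] <;> ring

lemma jc_5_2 (r s t : Fin 4 → F) :
    f2 F r (f4 F s t) + -f1 F (-f1 F r t) s
      + f4 F t (f4 F r s) = 0 := by
  funext u; fin_cases u <;> simp [f1, f2, f4] <;> ring

lemma jc_5_3 (r s t : Fin 4 → F) :
    f1 F r (-f2 F t s) + f2 F s (-f2 F r t)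
      + -f4 F (f4 F r s) t = 0 := by
  funext u; fin_cases u <;> simp [f1, f2, f4] <;> ring

lemma jc_5_4 (r s t : Fin 4 → F) :
    -f1 F (-f1 F t s) r + f4 F s (f4 F t r)
      + f2 F t (f4 F r s) = 0 := by
  funext u; fin_cases u <;> simp [f1, f2, f4] <;> ring

lemma jc_5_5 (r s t : Fin 4 → F) :
    (0 : Fin 4 → F) + f1 F s (-f4 F r t)
      + f1 F t (f4 F r s) = 0 := by
  funext u; fin_cases u <;> simp [f1, f2, f4] <;> ring

lemma jc_5_6 (r s t : Fin 4 → F) :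
    (0 : Fin 4 → F) + (0 : Fin 4 → F)
      + (0 : Fin 4 → F) = 0 := by
  simp

lemma jc_5_7 (r s t : Fin 4 → F) :
    -f4 F (f2 F s t) r + -f2 F (f1 F t r) s
      + -f1 F (f4 F r s) t = 0 := by
  funext u; fin_cases u <;> simp [f1, f2, f4] <;> ring

lemma jc_6_0 (r s t : Fin 4 → F) :
    -f2 F (0 : Fin 4 → F) r + f2 F s (0 : Fin 4 → F)
      + (0 : Fin 4 → F) = 0 := by
  funext u; fin_cases u <;> simp [f1, f2, f4] <;> ring

lemma jc_6_1 (r s t : Fin 4 → F) :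
    f4 F r (f2 F s t) + (0 : Fin 4 → F)
      + f4 F t (-f2 F s r) = 0 := by
  funext u; fin_cases u <;> simp [f1, f2, f4] <;> ring

lemma jc_6_2 (r s t : Fin 4 → F) :
    -f1 F (-f4 F t s) r + -f2 F (-f1 F r t) s
      + -f4 F (-f2 F s r) t = 0 := by
  funext u; fin_cases u <;> simp [f1, f2, f4] <;> ring

lemma jc_6_3 (r s t : Fin 4 → F) :
    -f4 F (f4 F s t) r + f1 F s (-f2 F r t)
      + f2 F t (-f2 F s r) = 0 := by
  funext u; fin_cases u <;> simp [f1, f2, f4] <;> ring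

lemma jc_6_4 (r s t : Fin 4 → F) :
    f2 F r (-f2 F t s) + -f4 F (f4 F t r) s
      + f1 F t (-f2 F s r) = 0 := by
  funext u; fin_cases u <;> simp [f1, f2, f4] <;> ring

lemma jc_6_5 (r s t : Fin 4 → F) :
    (0 : Fin 4 → F) + (0 : Fin 4 → F)
      + (0 : Fin 4 → F) = 0 := by
  simp

lemma jc_6_6 (r s t : Fin 4 → F) :
    (0 : Fin 4 → F) + -f1 F (f2 F t r) s
      + -f1 F (-f2 F s r) t = 0 := by
  funext u; fin_cases u <;> simp [f1, f2, f4] <;> ring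

lemma jc_6_7 (r s t : Fin 4 → F) :
    f1 F r (f1 F s t) + f4 F s (f1 F t r)
      + -f2 F (-f2 F s r) t = 0 := by
  funext u; fin_cases u <;> simp [f1, f2, f4] <;> ring

lemma jc_7_0 (r s t : Fin 4 → F) :
    -f1 F (0 : Fin 4 → F) r + f1 F s (0 : Fin 4 → F)
      + (0 : Fin 4 → F) = 0 := by
  funext u; fin_cases u <;> simp [f1, f2, f4] <;> ring

lemma jc_7_1 (r s t : Fin 4 → F) :
    f2 F r (f1 F s t) + (0 : Fin 4 → F)
      + f2 F t (-f1 F s r) = 0 := by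
  funext u; fin_cases u <;> simp [f1, f2, f4] <;> ring

lemma jc_7_2 (r s t : Fin 4 → F) :
    -f2 F (f2 F s t) r + f4 F s (-f1 F r t)
      + f1 F t (-f1 F s r) = 0 := by
  funext u; fin_cases u <;> simp [f1, f2, f4] <;> ring

lemma jc_7_3 (r s t : Fin 4 → F) :
    (0 : Fin 4 → F) + (0 : Fin 4 → F)
      + (0 : Fin 4 → F) = 0 := by
  simp

lemma jc_7_4 (r s t : Fin 4 → F) :
    f4 F r (f4 F s t) + f2 F s (f4 F t r)
      + -f1 F (-f1 F s r) t = 0 := by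
  funext u; fin_cases u <;> simp [f1, f2, f4] <;> ring

lemma jc_7_5 (r s t : Fin 4 → F) :
    -f4 F (-f2 F t s) r + -f1 F (-f4 F r t) s
      + -f2 F (-f1 F s r) t = 0 := by
  funext u; fin_cases u <;> simp [f1, f2, f4] <;> ring

lemma jc_7_6 (r s t : Fin 4 → F) :
    f1 F r (-f1 F t s) + -f2 F (f2 F t r) s
      + f4 F t (-f1 F s r) = 0 := by
  funext u; fin_cases u <;> simp [f1, f2, f4] <;> ring

lemma jc_7_7 (r s t : Fin 4 → F) :
    (0 : Fin 4 → F) + -f4 F (f1 F t r) s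
      + -f4 F (-f1 F s r) t = 0 := by
  funext u; fin_cases u <;> simp [f1, f2, f4] <;> ring

lemma jac_one : ∀ (j l : Fin 8) (r s t : Fin 4 → F),
    sigma F 1 (starTab j l) r (sigma F j l s t) + sigma F j (starTab l 1) s (sigma F l 1 t r)
      + sigma F l (starTab 1 j) t (sigma F 1 j r s) = 0 := by
  intro j l
  fin_cases j <;> fin_cases l
  · exact jc_0_0 F
  · exact jc_0_1 F
  · exact jc_0_2 F
  · exact jc_0_3 F
  · exact jc_0_4 F
  · exact jc_0_5 F
  · exact jc_0_6 F
  · exact jc_0_7 F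
  · exact jc_1_0 F
  · exact jc_1_1 F
  · exact jc_1_2 F
  · exact jc_1_3 F
  · exact jc_1_4 F
  · exact jc_1_5 F
  · exact jc_1_6 F
  · exact jc_1_7 F
  · exact jc_2_0 F
  · exact jc_2_1 F
  · exact jc_2_2 F
  · exact jc_2_3 F
  · exact jc_2_4 F
  · exact jc_2_5 F
  · exact jc_2_6 F
  · exact jc_2_7 F
  · exact jc_3_0 F
  · exact jc_3_1 F
  · exact jc_3_2 F
  · exact jc_3_3 F
  · exact jc_3_4 F
  · exact jc_3_5 F
  · exact jc_3_6 F
  · exact jc_3_7 F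
  · exact jc_4_0 F
  · exact jc_4_1 F
  · exact jc_4_2 F
  · exact jc_4_3 F
  · exact jc_4_4 F
  · exact jc_4_5 F
  · exact jc_4_6 F
  · exact jc_4_7 F
  · exact jc_5_0 F
  · exact jc_5_1 F
  · exact jc_5_2 F
  · exact jc_5_3 F
  · exact jc_5_4 F
  · exact jc_5_5 F
  · exact jc_5_6 F
  · exact jc_5_7 F
  · exact jc_6_0 F
  · exact jc_6_1 F
  · exact jc_6_2 F
  · exact jc_6_3 F
  · exact jc_6_4 F
  · exact jc_6_5 F
  · exact jc_6_6 F
  · exact jc_6_7 F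
  · exact jc_7_0 F
  · exact jc_7_1 F
  · exact jc_7_2 F
  · exact jc_7_3 F
  · exact jc_7_4 F
  · exact jc_7_5 F
  · exact jc_7_6 F
  · exact jc_7_7 F


lemma jac_shift (i : Fin 8)
    (h : ∀ (j l : Fin 8) (r s t : Fin 4 → F),
      sigma F i (starTab j l) r (sigma F j l s t) + sigma F j (starTab l i) s (sigma F l i t r)
        + sigma F l (starTab i j) t (sigma F i j r s) = 0) :
    ∀ (j l : Fin 8) (r s t : Fin 4 → F),
      sigma F (tau i) (starTab j l) r (sigma F j l s t)
        + sigma F j (starTab l (tau i)) s (sigma F l (tau i) t r)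
        + sigma F l (starTab (tau i) j) t (sigma F (tau i) j r s) = 0 := by
  intro j l r s t
  obtain ⟨j', rfl⟩ := tau_surj j
  obtain ⟨l', rfl⟩ := tau_surj l
  have hh := h j' l' r s t
  simp only [star_shift, sigma_shift] at *
  exact hh

lemma jac_all : ∀ (i j l : Fin 8) (r s t : Fin 4 → F),
    sigma F i (starTab j l) r (sigma F j l s t) + sigma F j (starTab l i) s (sigma F l i t r)
      + sigma F l (starTab i j) t (sigma F i j r s) = 0 := by
  have h0 : ∀ (j l : Fin 8) (r s t : Fin 4 → F),
      sigma F 0 (starTab j l) r (sigma F j l s t) + sigma F j (starTab l 0) s (sigma F l 0 t r)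
        + sigma F l (starTab 0 j) t (sigma F 0 j r s) = 0 := by
    intro j l r s t
    simp [sigma_idx0_left, sigma_idx0_right, sigma_vzero_left, sigma_vzero_right]
  have h1 := jac_one F
  have h2 := jac_shift F 1 h1
  have h3 := jac_shift F 2 h2
  have h4 := jac_shift F 3 h3
  have h5 := jac_shift F 4 h4
  have h6 := jac_shift F 5 h5
  have h7 := jac_shift F 6 h6
  intro i
  fin_cases i
  · exact h0
  · exact h1
  · exact h2
  · exact h3
  · exact h4
  · exact h5
  · exact h6
  · exact h7

/-! #### the contracted bracket on singles -/

lemma single_add (a : Fin 8) (v w : Fin 4 → F) :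
    single F a v + single F a w = single F a (v + w) := by
  funext k
  simp only [single, Pi.add_apply]
  split_ifs <;> simp

lemma single_zero (a : Fin 8) : single F a (0 : Fin 4 → F) = 0 := by
  funext k
  simp [single]

lemma x_eq_sum (x : Fin 8 → Fin 4 → F) : x = ∑ i : Fin 8, single F i (x i) := by
  funext k
  rw [Finset.sum_apply]
  simp [single]

lemma cbracket_zero_left (ε : Fin 8 → Fin 8 → F) (y : Fin 8 → Fin 4 → F) :
    cbracket F ε 0 y = 0 := by
  funext k
  simp [cbracket, sigma_vzero_left]

lemma cbracket_zero_right (ε : Fin 8 → Fin 8 → F) (x : Fin 8 → Fin 4 → F) :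
    cbracket F ε x 0 = 0 := by
  funext k
  simp [cbracket, sigma_vzero_right]

lemma cbracket_add_left (ε : Fin 8 → Fin 8 → F) (x x' y : Fin 8 → Fin 4 → F) :
    cbracket F ε (x + x') y = cbracket F ε x y + cbracket F ε x' y := by
  funext k
  simp only [cbracket, Pi.add_apply, ← Finset.sum_add_distrib]
  refine Finset.sum_congr rfl fun i _ => ?_
  refine Finset.sum_congr rfl fun j _ => ?_
  split_ifs with h
  · rw [sigma_add_left, smul_add]
  · rw [add_zero]

lemma cbracket_add_right (ε : Fin 8 → Fin 8 → F) (x y y' : Fin 8 → Fin 4 → F) :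
    cbracket F ε x (y + y') = cbracket F ε x y + cbracket F ε x y' := by
  funext k
  simp only [cbracket, Pi.add_apply, ← Finset.sum_add_distrib]
  refine Finset.sum_congr rfl fun i _ => ?_
  refine Finset.sum_congr rfl fun j _ => ?_
  split_ifs with h
  · rw [sigma_add_right, smul_add]
  · rw [add_zero]

lemma cbracket_sum_left (ε : Fin 8 → Fin 8 → F) (s : Finset (Fin 8))
    (f : Fin 8 → (Fin 8 → Fin 4 → F)) (y : Fin 8 → Fin 4 → F) :
    cbracket F ε (∑ a ∈ s, f a) y = ∑ a ∈ s, cbracket F ε (f a) y := by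
  classical
  induction s using Finset.induction_on with
  | empty => simp [cbracket_zero_left]
  | @insert a s ha ih =>
      rw [Finset.sum_insert ha, Finset.sum_insert ha, cbracket_add_left, ih]

lemma cbracket_sum_right (ε : Fin 8 → Fin 8 → F) (s : Finset (Fin 8))
    (f : Fin 8 → (Fin 8 → Fin 4 → F)) (x : Fin 8 → Fin 4 → F) :
    cbracket F ε x (∑ a ∈ s, f a) = ∑ a ∈ s, cbracket F ε x (f a) := by
  classical
  induction s using Finset.induction_on with
  | empty => simp [cbracket_zero_right]
  | @insert a s ha ih =>
      rw [Finset.sum_insert ha, Finset.sum_insert ha, cbracket_add_right, ih]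

lemma cbracket_single (ε : Fin 8 → Fin 8 → F) (i j : Fin 8) (r s : Fin 4 → F) :
    cbracket F ε (single F i r) (single F j s)
      = single F (starTab i j) (ε i j • sigma F i j r s) := by
  funext k
  simp only [cbracket, star_eq_tab]
  rw [Finset.sum_eq_single i]
  · rw [Finset.sum_eq_single j]
    · by_cases h : starTab i j = k
      · simp [single, h]
      · simp [single, h, Ne.symm h]
    · intro b _ hb
      simp [single, hb, sigma_vzero_right]
    · intro h; exact absurd (Finset.mem_univ j) h
  · intro b _ hb
    simp [single, hb, sigma_vzero_left]
  · intro h; exact absurd (Finset.mem_univ i) h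

lemma cbracket_triple (ε : Fin 8 → Fin 8 → F) (i j l : Fin 8) (r s t : Fin 4 → F) :
    cbracket F ε (single F i r) (cbracket F ε (single F j s) (single F l t))
      = single F (starTab i (starTab j l))
          ((ε i (starTab j l) * ε j l) • sigma F i (starTab j l) r (sigma F j l s t)) := by
  rw [cbracket_single, cbracket_single, sigma_smul_right, smul_smul]

/-! #### per-triple Jacobi for the contracted bracket -/

lemma key_val (ε : Fin 8 → Fin 8 → F) (hsym : ∀ a b, ε a b = ε b a)
    (hgood : ∀ i j l : Fin 8, i ≠ 0 → j ≠ 0 → l ≠ 0 → i ≠ j → j ≠ l → i ≠ l →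
      l ≠ starTab i j →
      (ε i (starTab j l) * ε j l = ε j (starTab l i) * ε l i ∧
       ε i (starTab j l) * ε j l = ε l (starTab i j) * ε i j))
    (i j l : Fin 8) (r s t : Fin 4 → F) :
    (ε i (starTab j l) * ε j l) • sigma F i (starTab j l) r (sigma F j l s t)
      + (ε j (starTab l i) * ε l i) • sigma F j (starTab l i) s (sigma F l i t r)
      + (ε l (starTab i j) * ε i j) • sigma F l (starTab i j) t (sigma F i j r s) = 0 := by
  have hJ := jac_all F i j l r s t
  by_cases hi : i = 0
  · subst hi
    simp [sigma_idx0_left, sigma_idx0_right, sigma_vzero_left, sigma_vzero_right]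
  by_cases hj : j = 0
  · subst hj
    simp [sigma_idx0_left, sigma_idx0_right, sigma_vzero_left, sigma_vzero_right]
  by_cases hl : l = 0
  · subst hl
    simp [sigma_idx0_left, sigma_idx0_right, sigma_vzero_left, sigma_vzero_right]
  by_cases hij : i = j
  · subst hij
    have hC : sigma F l (starTab i i) t (sigma F i i r s) = 0 := by
      rw [sigma_diag, sigma_vzero_right]
    have hco : ε i (starTab l i) * ε l i = ε i (starTab i l) * ε i l := by
      rw [star_comm l i, hsym l i]
    rw [hC, smul_zero, add_zero, hco, ← smul_add]
    rw [hC, add_zero] at hJ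
    rw [hJ, smul_zero]
  by_cases hjl : j = l
  · subst hjl
    have hA : sigma F i (starTab j j) r (sigma F j j s t) = 0 := by
      rw [sigma_diag, sigma_vzero_right]
    have hco : ε j (starTab i j) * ε i j = ε j (starTab j i) * ε j i := by
      rw [star_comm j i, hsym i j]
    rw [hA, smul_zero, zero_add, hco, ← smul_add]
    rw [hA, zero_add] at hJ
    rw [hJ, smul_zero]
  by_cases hil : i = l
  · subst hil
    have hB : sigma F j (starTab i i) s (sigma F i i t r) = 0 := by
      rw [sigma_diag, sigma_vzero_right]
    have hco : ε i (starTab i j) * ε i j = ε i (starTab j i) * ε j i := by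
      rw [star_comm j i, hsym j i]
    rw [hB, smul_zero, add_zero, hco, ← smul_add]
    rw [hB, add_zero] at hJ
    rw [hJ, smul_zero]
  by_cases hst : l = starTab i j
  · subst hst
    rw [star_cancel, star_cancel']
    rw [sigma_diag F i, sigma_diag F j, sigma_diag F (starTab i j)]
    simp [sigma_vzero_right]
  · obtain ⟨e1, e2⟩ := hgood i j l hi hj hl hij hjl hil hst
    rw [← e1, ← e2, ← smul_add, ← smul_add, hJ, smul_zero]

lemma key_triple (ε : Fin 8 → Fin 8 → F) (hsym : ∀ a b, ε a b = ε b a)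
    (hgood : ∀ i j l : Fin 8, i ≠ 0 → j ≠ 0 → l ≠ 0 → i ≠ j → j ≠ l → i ≠ l →
      l ≠ starTab i j →
      (ε i (starTab j l) * ε j l = ε j (starTab l i) * ε l i ∧
       ε i (starTab j l) * ε j l = ε l (starTab i j) * ε i j))
    (i j l : Fin 8) (r s t : Fin 4 → F) :
    cbracket F ε (single F i r) (cbracket F ε (single F j s) (single F l t))
      + cbracket F ε (single F j s) (cbracket F ε (single F l t) (single F i r))
      + cbracket F ε (single F l t) (cbracket F ε (single F i r) (single F j s)) = 0 := by
  rw [cbracket_triple, cbracket_triple, cbracket_triple]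
  rw [(star_rot i j l).1, (star_rot i j l).2]
  rw [single_add, single_add, key_val F ε hsym hgood i j l r s t, single_zero]

/-! #### summation bookkeeping -/

lemma rev3 (g : Fin 8 → Fin 8 → Fin 8 → (Fin 8 → Fin 4 → F)) :
    ∑ c : Fin 8, ∑ b : Fin 8, ∑ a : Fin 8, g a b c
      = ∑ a : Fin 8, ∑ b : Fin 8, ∑ c : Fin 8, g a b c :=
  calc ∑ c : Fin 8, ∑ b : Fin 8, ∑ a : Fin 8, g a b c
      = ∑ b : Fin 8, ∑ c : Fin 8, ∑ a : Fin 8, g a b c := Finset.sum_comm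
    _ = ∑ b : Fin 8, ∑ a : Fin 8, ∑ c : Fin 8, g a b c :=
        Finset.sum_congr rfl fun b _ => Finset.sum_comm
    _ = ∑ a : Fin 8, ∑ b : Fin 8, ∑ c : Fin 8, g a b c := Finset.sum_comm

lemma swap23 (g : Fin 8 → Fin 8 → Fin 8 → (Fin 8 → Fin 4 → F)) :
    ∑ a : Fin 8, ∑ c : Fin 8, ∑ b : Fin 8, g a b c
      = ∑ a : Fin 8, ∑ b : Fin 8, ∑ c : Fin 8, g a b c :=
  Finset.sum_congr rfl fun a _ => Finset.sum_comm

lemma swap12 (g : Fin 8 → Fin 8 → Fin 8 → (Fin 8 → Fin 4 → F)) :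
    ∑ b : Fin 8, ∑ a : Fin 8, ∑ c : Fin 8, g a b c
      = ∑ a : Fin 8, ∑ b : Fin 8, ∑ c : Fin 8, g a b c :=
  Finset.sum_comm

lemma sum3_jac (T1 T2 T3 : Fin 8 → Fin 8 → Fin 8 → (Fin 8 → Fin 4 → F))
    (h : ∀ i j l, T1 i j l + T2 i j l + T3 i j l = 0) :
    (∑ l : Fin 8, ∑ j : Fin 8, ∑ i : Fin 8, T1 i j l)
      + (∑ i : Fin 8, ∑ l : Fin 8, ∑ j : Fin 8, T2 i j l)
      + (∑ j : Fin 8, ∑ i : Fin 8, ∑ l : Fin 8, T3 i j l) = 0 := by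
  rw [rev3 F T1, swap23 F T2, swap12 F T3]
  rw [← Finset.sum_add_distrib, ← Finset.sum_add_distrib]
  refine Finset.sum_eq_zero fun i _ => ?_
  rw [← Finset.sum_add_distrib, ← Finset.sum_add_distrib]
  refine Finset.sum_eq_zero fun j _ => ?_
  rw [← Finset.sum_add_distrib, ← Finset.sum_add_distrib]
  refine Finset.sum_eq_zero fun l _ => ?_
  exact h i j l

lemma jacobi_cb (ε : Fin 8 → Fin 8 → F) (hsym : ∀ a b, ε a b = ε b a)
    (hgood : ∀ i j l : Fin 8, i ≠ 0 → j ≠ 0 → l ≠ 0 → i ≠ j → j ≠ l → i ≠ l →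
      l ≠ starTab i j →
      (ε i (starTab j l) * ε j l = ε j (starTab l i) * ε l i ∧
       ε i (starTab j l) * ε j l = ε l (starTab i j) * ε i j))
    (x y z : Fin 8 → Fin 4 → F) :
    cbracket F ε x (cbracket F ε y z) + cbracket F ε y (cbracket F ε z x)
      + cbracket F ε z (cbracket F ε x y) = 0 := by
  conv_lhs => rw [x_eq_sum F x, x_eq_sum F y, x_eq_sum F z]
  simp only [cbracket_sum_left, cbracket_sum_right]
  exact sum3_jac F
    (fun i j l => cbracket F ε (single F i (x i))
      (cbracket F ε (single F j (y j)) (single F l (z l))))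
    (fun i j l => cbracket F ε (single F j (y j))
      (cbracket F ε (single F l (z l)) (single F i (x i))))
    (fun i j l => cbracket F ε (single F l (z l))
      (cbracket F ε (single F i (x i)) (single F j (y j))))
    (fun i j l => key_triple F ε hsym hgood i j l (x i) (y j) (z l))

/-! #### alternation -/

lemma sum_self_cancel (f : Fin 8 → Fin 8 → (Fin 4 → F)) (h : ∀ i j, f i j + f j i = 0) :
    (∑ i : Fin 8, ∑ j : Fin 8, f i j) + (∑ i : Fin 8, ∑ j : Fin 8, f i j) = 0 := by
  have e : (∑ i : Fin 8, ∑ j : Fin 8, f i j) = ∑ i : Fin 8, ∑ j : Fin 8, f j i :=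
    Finset.sum_comm
  nth_rewrite 2 [e]
  rw [← Finset.sum_add_distrib]
  refine Finset.sum_eq_zero fun i _ => ?_
  rw [← Finset.sum_add_distrib]
  exact Finset.sum_eq_zero fun j _ => h i j

lemma cb_alt (ε : Fin 8 → Fin 8 → F) (hsym : ∀ a b, ε a b = ε b a) (h2 : (2 : F) ≠ 0)
    (x : Fin 8 → Fin 4 → F) : cbracket F ε x x = 0 := by
  funext k u
  have hv : cbracket F ε x x k + cbracket F ε x x k = 0 := by
    have e1 : cbracket F ε x x k = ∑ i : Fin 8, ∑ j : Fin 8,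
        (fun i j => if starTab i j = k then ε i j • sigma F i j (x i) (x j) else 0) i j := by
      simp only [cbracket, star_eq_tab]
    rw [e1]
    apply sum_self_cancel
    intro i j
    show (if starTab i j = k then ε i j • sigma F i j (x i) (x j) else 0)
        + (if starTab j i = k then ε j i • sigma F j i (x j) (x i) else 0) = 0
    rw [star_comm j i, hsym j i, sigma_skew F i j (x i) (x j)]
    split_ifs with h
    · rw [smul_neg]
      simp
    · rw [add_zero]
  have h' := congrFun hv u
  simp only [Pi.add_apply, Pi.zero_apply] at h'
  have h2a : (2 : F) * (cbracket F ε x x k u) = 0 := by rw [two_mul]; exact h'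
  have := mul_eq_zero.mp h2a
  rcases this with h | h
  · exact absurd h h2
  · exact h

lemma isLie_of (ε : Fin 8 → Fin 8 → F) (hsym : ∀ a b, ε a b = ε b a)
    (hgood : ∀ i j l : Fin 8, i ≠ 0 → j ≠ 0 → l ≠ 0 → i ≠ j → j ≠ l → i ≠ l →
      l ≠ starTab i j →
      (ε i (starTab j l) * ε j l = ε j (starTab l i) * ε l i ∧
       ε i (starTab j l) * ε j l = ε l (starTab i j) * ε i j))
    (h2 : (2 : F) ≠ 0) : IsLieProd F (cbracket F ε) :=
  ⟨cb_alt F ε hsym h2, fun x y z => jacobi_cb F ε hsym hgood x y z⟩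

/-! #### the four families of contractions -/

lemma epsT_one {T : Set (Sym2 (Fin 8))} {i j : Fin 8} (h : s(i, j) ∈ T) :
    epsT F T i j = 1 := by
  unfold epsT; rw [if_pos h]

lemma epsT_zero {T : Set (Sym2 (Fin 8))} {i j : Fin 8} (h : s(i, j) ∉ T) :
    epsT F T i j = 0 := by
  unfold epsT; rw [if_neg h]

lemma epsT_symm (T : Set (Sym2 (Fin 8))) : ∀ a b : Fin 8, epsT F T a b = epsT F T b a := by
  intro a b
  have h : s(a, b) = s(b, a) := Sym2.eq_swap
  unfold epsT
  rw [h]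

lemma epsT_good (T : Set (Sym2 (Fin 8))) (hN : Nice T) :
    ∀ i j l : Fin 8, i ≠ 0 → j ≠ 0 → l ≠ 0 → i ≠ j → j ≠ l → i ≠ l → l ≠ starTab i j →
      (epsT F T i (starTab j l) * epsT F T j l
          = epsT F T j (starTab l i) * epsT F T l i ∧
       epsT F T i (starTab j l) * epsT F T j l
          = epsT F T l (starTab i j) * epsT F T i j) := by
  intro i j l hi hj hl hij hjl hil hst
  have key : ∀ a b c : Fin 8, a ≠ 0 → b ≠ 0 → c ≠ 0 → a ≠ b → b ≠ c → a ≠ c →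
      c ≠ starTab a b → s(a, b) ∈ T → s(starTab a b, c) ∈ T →
      (s(b, c) ∈ T ∧ s(c, a) ∈ T ∧ s(a, starTab b c) ∈ T ∧ s(b, starTab c a) ∈ T ∧
        s(c, starTab a b) ∈ T) := by
    intro a b c h1 h2 h3 h4 h5 h6 h7 m1 m2
    have hsub := hN a b c h1 h2 h3 h4 h5 h6
      (by rw [star_eq_tab]; exact h7) m1 (by rw [star_eq_tab]; exact m2)
    refine ⟨hsub ?_, hsub ?_, hsub ?_, hsub ?_, hsub ?_⟩ <;>
      simp [Pset, star_eq_tab]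
  have pone : ∀ a b c d : Fin 8, s(a, b) ∈ T ∧ s(c, d) ∈ T →
      epsT F T c d * epsT F T a b = 1 := by
    intro a b c d h
    rw [epsT_one F h.2, epsT_one F h.1, one_mul]
  have pzero : ∀ a b c d : Fin 8, ¬(s(a, b) ∈ T ∧ s(c, d) ∈ T) →
      epsT F T c d * epsT F T a b = 0 := by
    intro a b c d h
    rcases not_and_or.mp h with h | h
    · rw [epsT_zero F h, mul_zero]
    · rw [epsT_zero F h, zero_mul]
  have hstar1 : i ≠ starTab j l := by
    intro he
    exact hst (((star_cycle l i j).mp ((star_cycle j l i).mp he.symm)).symm)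
  have hstar2 : j ≠ starTab l i := by
    intro he
    exact hst (((star_cycle l i j).mp he.symm).symm)
  have cyc1 : (s(j, l) ∈ T ∧ s(i, starTab j l) ∈ T) →
      (s(l, i) ∈ T ∧ s(j, starTab l i) ∈ T) ∧ (s(i, j) ∈ T ∧ s(l, starTab i j) ∈ T) := by
    rintro ⟨m1, m2⟩
    have m2' : s(starTab j l, i) ∈ T := by rwa [Sym2.eq_swap] at m2
    obtain ⟨k1, k2, k3, k4, k5⟩ :=
      key j l i hj hl hi hjl (Ne.symm hil) (Ne.symm hij) hstar1 m1 m2'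
    exact ⟨⟨k1, k3⟩, ⟨k2, k4⟩⟩
  have cyc2 : (s(l, i) ∈ T ∧ s(j, starTab l i) ∈ T) →
      (s(i, j) ∈ T ∧ s(l, starTab i j) ∈ T) ∧ (s(j, l) ∈ T ∧ s(i, starTab j l) ∈ T) := by
    rintro ⟨m1, m2⟩
    have m2' : s(starTab l i, j) ∈ T := by rwa [Sym2.eq_swap] at m2
    obtain ⟨k1, k2, k3, k4, k5⟩ :=
      key l i j hl hi hj (Ne.symm hil) hij (Ne.symm hjl) hstar2 m1 m2'
    exact ⟨⟨k1, k3⟩, ⟨k2, k4⟩⟩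
  have cyc3 : (s(i, j) ∈ T ∧ s(l, starTab i j) ∈ T) →
      (s(j, l) ∈ T ∧ s(i, starTab j l) ∈ T) ∧ (s(l, i) ∈ T ∧ s(j, starTab l i) ∈ T) := by
    rintro ⟨m1, m2⟩
    have m2' : s(starTab i j, l) ∈ T := by rwa [Sym2.eq_swap] at m2
    obtain ⟨k1, k2, k3, k4, k5⟩ := key i j l hi hj hl hij hjl hil hst m1 m2'
    exact ⟨⟨k1, k3⟩, ⟨k2, k4⟩⟩
  by_cases m1 : s(j, l) ∈ T ∧ s(i, starTab j l) ∈ T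
  · obtain ⟨m2, m3⟩ := cyc1 m1
    rw [pone _ _ _ _ m1, pone _ _ _ _ m2, pone _ _ _ _ m3]
    exact ⟨rfl, rfl⟩
  · have m2 : ¬(s(l, i) ∈ T ∧ s(j, starTab l i) ∈ T) := fun h => m1 (cyc2 h).2
    have m3 : ¬(s(i, j) ∈ T ∧ s(l, starTab i j) ∈ T) := fun h => m1 (cyc3 h).1
    rw [pzero _ _ _ _ m1, pzero _ _ _ _ m2, pzero _ _ _ _ m3]
    exact ⟨rfl, rfl⟩

/-- The "star at 1" support list containing all pairs of the supports of
`η, μ, β`. -/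
def Lstar : List (Fin 8 × Fin 8) := [(1,2),(1,3),(1,4),(1,5),(1,6),(1,7)]

lemma inPairs_sublist {i j : Fin 8} {l1 l2 : List (Fin 8 × Fin 8)} (hs : l1 ⊆ l2)
    (h : inPairs i j l1) : inPairs i j l2 := by
  rcases h with h | h
  · exact Or.inl (hs h)
  · exact Or.inr (hs h)

lemma star_supp : ∀ i j l : Fin 8, i ≠ 0 → j ≠ 0 → l ≠ 0 → i ≠ j → j ≠ l → i ≠ l →
    l ≠ starTab i j →
    (¬ inPairs j l Lstar ∨ ¬ inPairs i (starTab j l) Lstar) ∧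
    (¬ inPairs l i Lstar ∨ ¬ inPairs j (starTab l i) Lstar) ∧
    (¬ inPairs i j Lstar ∨ ¬ inPairs l (starTab i j) Lstar) := by decide

lemma good_of_supp (ε : Fin 8 → Fin 8 → F)
    (hv : ∀ i j : Fin 8, ¬ inPairs i j Lstar → ε i j = 0) :
    ∀ i j l : Fin 8, i ≠ 0 → j ≠ 0 → l ≠ 0 → i ≠ j → j ≠ l → i ≠ l → l ≠ starTab i j →
      (ε i (starTab j l) * ε j l = ε j (starTab l i) * ε l i ∧
       ε i (starTab j l) * ε j l = ε l (starTab i j) * ε i j) := by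
  intro i j l h1 h2 h3 h4 h5 h6 h7
  obtain ⟨d1, d2, d3⟩ := star_supp i j l h1 h2 h3 h4 h5 h6 h7
  have p1 : ε i (starTab j l) * ε j l = 0 := by
    rcases d1 with h | h
    · rw [hv _ _ h, mul_zero]
    · rw [hv _ _ h, zero_mul]
  have p2 : ε j (starTab l i) * ε l i = 0 := by
    rcases d2 with h | h
    · rw [hv _ _ h, mul_zero]
    · rw [hv _ _ h, zero_mul]
  have p3 : ε l (starTab i j) * ε i j = 0 := by
    rcases d3 with h | h
    · rw [hv _ _ h, mul_zero]
    · rw [hv _ _ h, zero_mul]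
  rw [p1, p2, p3]
  exact ⟨rfl, rfl⟩

lemma etaC_supp (lam : F) : ∀ i j : Fin 8, ¬ inPairs i j Lstar → etaC F lam i j = 0 := by
  intro i j h
  have h1 : ¬ inPairs i j [(1, 2), (1, 3), (1, 4)] :=
    fun hc => h (inPairs_sublist (by decide) hc)
  have h2 : ¬ inPairs i j [(1, 7)] := fun hc => h (inPairs_sublist (by decide) hc)
  unfold etaC
  rw [if_neg h1, if_neg h2]

lemma muC_supp (lam : F) : ∀ i j : Fin 8, ¬ inPairs i j Lstar → muC F lam i j = 0 := by
  intro i j h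
  have h1 : ¬ inPairs i j [(1, 2), (1, 4), (1, 6)] :=
    fun hc => h (inPairs_sublist (by decide) hc)
  have h2 : ¬ inPairs i j [(1, 3), (1, 7)] := fun hc => h (inPairs_sublist (by decide) hc)
  unfold muC
  rw [if_neg h1, if_neg h2]

lemma betaC_supp (lam1 lam2 : F) :
    ∀ i j : Fin 8, ¬ inPairs i j Lstar → betaC F lam1 lam2 i j = 0 := by
  intro i j h
  have h1 : ¬ inPairs i j [(1, 2), (1, 4)] := fun hc => h (inPairs_sublist (by decide) hc)
  have h2 : ¬ inPairs i j [(1, 3), (1, 7)] := fun hc => h (inPairs_sublist (by decide) hc)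
  have h3 : ¬ inPairs i j [(1, 5), (1, 6)] := fun hc => h (inPairs_sublist (by decide) hc)
  unfold betaC
  rw [if_neg h1, if_neg h2, if_neg h3]

lemma etaC_symm (lam : F) : ∀ a b : Fin 8, etaC F lam a b = etaC F lam b a := by
  intro a b
  fin_cases a <;> fin_cases b <;> rfl

lemma muC_symm (lam : F) : ∀ a b : Fin 8, muC F lam a b = muC F lam b a := by
  intro a b
  fin_cases a <;> fin_cases b <;> rfl

lemma betaC_symm (lam1 lam2 : F) :
    ∀ a b : Fin 8, betaC F lam1 lam2 a b = betaC F lam1 lam2 b a := by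
  intro a b
  fin_cases a <;> fin_cases b <;> rfl


/-- **Statement 19.** (char F ≠ 2,3.) For every nice set `T ⊆ X` and every map
`η^λ, μ^λ, β^{λ₁,λ₂}` (`λ, λ₁, λ₂ ≠ 0`), the corresponding contracted product on
`V^σ[G]` is a Lie bracket; hence `V^{εσ}[G]` is a Lie algebra over `G`. -/
theorem contracted_products_are_lie (h2 : (2 : F) ≠ 0) (h3 : (3 : F) ≠ 0) :
    (∀ T : Set (Sym2 (Fin 8)),
      (∀ p ∈ T, ∃ i j : Fin 8, i ≠ 0 ∧ j ≠ 0 ∧ i ≠ j ∧ p = s(i, j)) →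
      Nice T → IsLieProd F (cbracket F (epsT F T))) ∧
    (∀ lam : F, lam ≠ 0 → IsLieProd F (cbracket F (etaC F lam))) ∧
    (∀ lam : F, lam ≠ 0 → IsLieProd F (cbracket F (muC F lam))) ∧
    (∀ lam1 lam2 : F, lam1 ≠ 0 → lam2 ≠ 0 →
      IsLieProd F (cbracket F (betaC F lam1 lam2))) := by
  refine ⟨?_, ?_, ?_, ?_⟩
  · intro T _ hN
    exact isLie_of F (epsT F T) (epsT_symm F T) (epsT_good F T hN) h2
  · intro lam _
    exact isLie_of F (etaC F lam) (etaC_symm F lam)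
      (good_of_supp F (etaC F lam) (etaC_supp F lam)) h2
  · intro lam _
    exact isLie_of F (muC F lam) (muC_symm F lam)
      (good_of_supp F (muC F lam) (muC_supp F lam)) h2
  · intro lam1 lam2 _ _
    exact isLie_of F (betaC F lam1 lam2) (betaC_symm F lam1 lam2)
      (good_of_supp F (betaC F lam1 lam2) (betaC_supp F lam1 lam2)) h2

end
end GGA
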